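/- arXiv:1511.06168 — 2 statements merged into one kernel-verified Lean document; each statement's English description precedes it below -/
import Mathlib

section
/- For every prime p, the quotient ring ℤ_(p)[X]/(X² − X + p) of the polynomial ring ℤ_(p)[X] by the principal ideal generated by X² − X + p is not a local ring. -/
open Polynomial

instance intSpanPrime (p : ℕ) [Fact p.Prime] : (Ideal.span {(p : ℤ)}).IsPrime := by
  rw [Ideal.span_singleton_prime (by exact_mod_cast (Fact.out : p.Prime).ne_zero)]
  exact Int.prime_iff_natAbs_prime.mpr (by simpa using (Fact.out : p.Prime))

/-- `ℤ_(p)`: the localization of `ℤ` at the prime `p`, i.e. the subring of `ℚ`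
consisting of fractions whose denominator is not divisible by `p`. -/
abbrev ZpLocal (p : ℕ) [Fact p.Prime] : Type :=
  Localization.AtPrime (Ideal.span {(p : ℤ)})

lemma ZpLocal.not_isUnit_p (p : ℕ) [Fact p.Prime] : ¬ IsUnit ((p : ZpLocal p)) := by
  intro h
  have h2 : IsUnit (algebraMap ℤ (ZpLocal p) ((p : ℕ) : ℤ)) := by
    rwa [map_natCast]
  rw [IsLocalization.AtPrime.isUnit_to_map_iff (ZpLocal p) (Ideal.span {(p : ℤ)})] at h2
  exact h2 (Ideal.mem_span_singleton_self _)

/-- For every prime `p`, the ring `ℤ_(p)[X] / (X² - X + p)` is not local. -/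
theorem quotient_span_sq_sub_add_not_isLocalRing (p : ℕ) [Fact p.Prime] :
    ¬ IsLocalRing ((ZpLocal p)[X] ⧸
      Ideal.span {(X ^ 2 - X + (p : (ZpLocal p)[X]) : (ZpLocal p)[X])}) := by
  intro hS
  haveI := hS
  set R := ZpLocal p with hR
  set f : R[X] := X ^ 2 - X + (p : R[X]) with hf
  set I := Ideal.span {f} with hI
  -- p is in the maximal ideal of R
  have hpmem : (p : R) ∈ IsLocalRing.maximalIdeal R :=
    ZpLocal.not_isUnit_p p
  have hresp : IsLocalRing.residue R (p : R) = 0 :=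
    (Ideal.Quotient.eq_zero_iff_mem).mpr hpmem
  -- For c with residue (eval c f) = 0, build a hom to the residue field
  have key : ∀ c : R, IsLocalRing.residue R (eval c f) = 0 →
      ∀ g : R[X], IsUnit (Ideal.Quotient.mk I g) →
        IsUnit (IsLocalRing.residue R (eval c g)) := by
    intro c hc g hg
    set φ : R[X] →+* IsLocalRing.ResidueField R :=
      (IsLocalRing.residue R).comp (evalRingHom c) with hφ
    have hker : ∀ a ∈ I, φ a = 0 := by
      intro a ha
      obtain ⟨b, rfl⟩ := Ideal.mem_span_singleton.mp ha
      have : φ f = 0 := hc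
      rw [map_mul, this, zero_mul]
    set ψ := Ideal.Quotient.lift I φ hker with hψ
    have : ψ (Ideal.Quotient.mk I g) = IsLocalRing.residue R (eval c g) := by
      simp [hψ, hφ]
    exact this ▸ hg.map ψ
  -- the images of X and 1 - X sum to 1, so one of them is a unit
  have hsum : Ideal.Quotient.mk I X + Ideal.Quotient.mk I (1 - X) = 1 := by
    rw [← map_add]
    norm_num
  have := hS.isUnit_or_isUnit_of_add_one hsum
  rcases this with h | h
  · have h0 : IsLocalRing.residue R (eval (0 : R) f) = 0 := by
      simp [hf, hresp]
    have := key 0 h0 X h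
    simp at this
  · have h1 : IsLocalRing.residue R (eval (1 : R) f) = 0 := by
      simp [hf, hresp]
    have := key 1 h1 (1 - X) h
    simp at this
end

section
/- For every prime p, in the quotient ring ℤ_(p)[X]/(X² − X + p), neither the residue class of X nor the residue class of 1 − X is a unit. -/
open Polynomial

lemma residue_p_zero (p : ℕ) [Fact p.Prime] :
    ((p : ℕ) : IsLocalRing.ResidueField (ZpLocal p)) = 0 := by
  have h1 : ((p : ℕ) : ZpLocal p) = algebraMap ℤ (ZpLocal p) (p : ℤ) := by
    push_cast; rfl
  have h2 : ¬ IsUnit ((p : ℕ) : ZpLocal p) := by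
    rw [h1, IsLocalization.AtPrime.isUnit_to_map_iff (ZpLocal p) (Ideal.span {(p : ℤ)})]
    exact fun h => h (Ideal.mem_span_singleton_self _)
  have h3 : ((p : ℕ) : IsLocalRing.ResidueField (ZpLocal p)) =
      IsLocalRing.residue (ZpLocal p) ((p : ℕ) : ZpLocal p) := by
    simp
  rw [h3]
  exact (IsLocalRing.residue_eq_zero_iff _).mpr ((IsLocalRing.mem_maximalIdeal _).mpr h2)

lemma unit_eval (p : ℕ) [Fact p.Prime] (c : IsLocalRing.ResidueField (ZpLocal p))
    (hc : c ^ 2 - c + (p : IsLocalRing.ResidueField (ZpLocal p)) = 0) (g : (ZpLocal p)[X])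
    (hg : IsUnit (Ideal.Quotient.mk
      (Ideal.span {(X ^ 2 - X + (p : (ZpLocal p)[X]) : (ZpLocal p)[X])}) g)) :
    IsUnit (eval₂ (IsLocalRing.residue (ZpLocal p)) c g) := by
  set I : Ideal (ZpLocal p)[X] :=
    Ideal.span {(X ^ 2 - X + (p : (ZpLocal p)[X]) : (ZpLocal p)[X])} with hI
  have key : ∀ a ∈ I, eval₂RingHom (IsLocalRing.residue (ZpLocal p)) c a = 0 := by
    intro a ha
    rw [hI, Ideal.mem_span_singleton] at ha
    obtain ⟨q, rfl⟩ := ha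
    rw [map_mul]
    have : eval₂RingHom (IsLocalRing.residue (ZpLocal p)) c
        (X ^ 2 - X + (p : (ZpLocal p)[X])) = 0 := by
      simp only [coe_eval₂RingHom, eval₂_add, eval₂_sub, eval₂_pow, eval₂_X, eval₂_natCast]
      exact hc
    rw [this, zero_mul]
  let φ : (ZpLocal p)[X] ⧸ I →+* IsLocalRing.ResidueField (ZpLocal p) :=
    Ideal.Quotient.lift I (eval₂RingHom (IsLocalRing.residue (ZpLocal p)) c) key
  have : eval₂ (IsLocalRing.residue (ZpLocal p)) c g = φ (Ideal.Quotient.mk I g) := rfl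
  rw [this]
  exact hg.map φ

/-- For every prime `p`, in the quotient ring `ℤ_(p)[X] / (X² - X + p)`, neither the
residue class of `X` nor the residue class of `1 - X` is a unit. -/
theorem residues_not_units (p : ℕ) [Fact p.Prime] :
    ¬ IsUnit (Ideal.Quotient.mk
        (Ideal.span {(X ^ 2 - X + (p : (ZpLocal p)[X]) : (ZpLocal p)[X])}) X) ∧
      ¬ IsUnit (Ideal.Quotient.mk
        (Ideal.span {(X ^ 2 - X + (p : (ZpLocal p)[X]) : (ZpLocal p)[X])}) (1 - X)) := by
  have hp := residue_p_zero p
  constructor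
  · intro h
    have := unit_eval p 0 (by simp [hp]) X h
    simp at this
  · intro h
    have := unit_eval p 1 (by simp [hp]) (1 - X) h
    simp at this
end
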